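/- The modified κ-entanglement Ẽ_κ is monotone under channels N that are both PPT and non-entangling: Ẽ_κ(N(ρ)) ≤ Ẽ_κ(ρ). The key step: if S is feasible for ρ (i.e., S^Γ ± ρ^Γ ≥ 0, S ∈ cone(S)), then T := N(S) is feasible for N(ρ), since T^Γ ± N(ρ)^Γ = (Γ∘N∘Γ)(S^Γ ± ρ^Γ) ≥ 0 by complete positivity of Γ∘N∘Γ, and T ∈ cone(S) since N is non-entangling; moreover Tr T = Tr S. -/

import Mathlib

open Matrix BigOperators
open scoped Kronecker ComplexOrder

noncomputable section

abbrev BOp (d : ℕ) := Matrix (Fin d × Fin d) (Fin d × Fin d) ℂ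

/-- Loewner order: `A ≤ B` iff `B - A` is positive semidefinite. -/
def loe {n : Type*} [Fintype n] (A B : Matrix n n ℂ) : Prop := (B - A).PosSemidef

/-- A density operator: positive semidefinite with unit trace. -/
def IsState {n : Type*} [Fintype n] [DecidableEq n] (ρ : Matrix n n ℂ) : Prop :=
  ρ.PosSemidef ∧ ρ.trace = 1

/-- Separable bipartite state (convex combination of product states). -/
def IsSep {a b : Type*} [Fintype a] [DecidableEq a] [Fintype b] [DecidableEq b]
    (ρ : Matrix (a × b) (a × b) ℂ) : Prop :=
  ∃ (m : ℕ) (p : Fin m → ℝ) (A : Fin m → Matrix a a ℂ) (B : Fin m → Matrix b b ℂ),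
    (∀ i, 0 ≤ p i) ∧ (∑ i, p i) = 1 ∧
    (∀ i, IsState (A i)) ∧ (∀ i, IsState (B i)) ∧
    ρ = ∑ i, ((p i : ℝ) : ℂ) • (A i ⊗ₖ B i)

/-- The cone generated by separable states. -/
def InSepCone {a b : Type*} [Fintype a] [DecidableEq a] [Fintype b] [DecidableEq b]
    (S : Matrix (a × b) (a × b) ℂ) : Prop :=
  ∃ (c : ℝ) (σ : Matrix (a × b) (a × b) ℂ), 0 ≤ c ∧ IsSep σ ∧ S = ((c : ℝ) : ℂ) • σ

/-- Maximally entangled state `Φ_d` on `ℂ^d ⊗ ℂ^d`. -/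
def PhiME (d : ℕ) : BOp d := fun p q => if p.1 = p.2 ∧ q.1 = q.2 then ((1 : ℂ) / d) else 0

/-- `τ_d = (𝟙 - Φ_d)/(d² - 1)`. -/
def tauME (d : ℕ) : BOp d := (((d : ℂ)^2 - 1))⁻¹ • (1 - PhiME d)

/-- Partial transpose on the second tensor factor. -/
def pt {a b : Type*} (A : Matrix (a × b) (a × b) ℂ) : Matrix (a × b) (a × b) ℂ :=
  fun p q => A (p.1, q.2) (q.1, p.2)

/-- Total positive-semidefinite square root (junk value `0` off the PSD cone). -/
noncomputable def msqrt {n : Type*} [Fintype n] [DecidableEq n] (A : Matrix n n ℂ) :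
    Matrix n n ℂ :=
  open scoped Classical in
  if h : A.PosSemidef then
    h.1.eigenvectorUnitary.1 * diagonal ((↑) ∘ Real.sqrt ∘ h.1.eigenvalues) *
      (star h.1.eigenvectorUnitary : Matrix n n ℂ)
  else 0

/-- Trace norm `‖A‖₁ = Tr √(AᴴA)`. -/
noncomputable def traceNorm {n : Type*} [Fintype n] [DecidableEq n] (A : Matrix n n ℂ) : ℝ :=
  (msqrt (Aᴴ * A)).trace.re


/-- Modified κ-entanglement `Ẽ_κ(ρ) = log₂ min{Tr S : -S ≤ ρ^Γ ≤ S, S ∈ cone(S)}`. -/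
noncomputable def Ekappa {a b : Type*} [Fintype a] [DecidableEq a] [Fintype b] [DecidableEq b]
    (ρ : Matrix (a × b) (a × b) ℂ) : ℝ :=
  Real.logb 2
    (sInf {t : ℝ | ∃ S, InSepCone S ∧ loe (-S) (pt ρ) ∧ loe (pt ρ) S ∧ t = S.trace.re})

/-- Complete positivity, via the existence of a Kraus representation. -/
def IsCPfun {n m : Type*} [Fintype n] [Fintype m]
    (f : Matrix n n ℂ → Matrix m m ℂ) : Prop :=
  ∃ (k : ℕ) (K : Fin k → Matrix m n ℂ), ∀ X, f X = ∑ i, K i * X * (K i)ᴴ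

/-!
If `S` is feasible for `ρ`, i.e. `S` lies in the separable cone and `-S ≤ ρ^Γ ≤ S`, then so is
`T := (N S^Γ)^Γ` for `N ρ`: the bounds follow by applying the positive map `Γ ∘ N ∘ Γ` to
`S ± ρ^Γ ≥ 0`, membership in the cone because `Γ` and `N` preserve separability, and
`Tr T = Tr S` because `N` preserves traces. So the infimum defining `Ẽ_κ(N ρ)` is taken over a
larger set; it is at least `Tr N ρ = 1`, which keeps `log₂` monotone.
-/

open scoped MatrixOrder

lemma loe_iff_le {n : Type*} [Fintype n] {A B : Matrix n n ℂ} : loe A B ↔ A ≤ B := Iff.rfl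

section PartialTranspose

variable {a b : Type*}

@[simp]
lemma pt_pt (A : Matrix (a × b) (a × b) ℂ) : pt (pt A) = A := rfl

@[simp]
lemma pt_add (A B : Matrix (a × b) (a × b) ℂ) : pt (A + B) = pt A + pt B := rfl

@[simp]
lemma pt_smul (c : ℂ) (A : Matrix (a × b) (a × b) ℂ) : pt (c • A) = c • pt A := rfl

lemma pt_sum {ι : Type*} (s : Finset ι) (f : ι → Matrix (a × b) (a × b) ℂ) :
    pt (∑ i ∈ s, f i) = ∑ i ∈ s, pt (f i) := by
  ext p q
  simp only [pt, Matrix.sum_apply]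

lemma pt_kronecker (A : Matrix a a ℂ) (B : Matrix b b ℂ) : pt (A ⊗ₖ B) = A ⊗ₖ Bᵀ := rfl

lemma trace_pt [Fintype a] [Fintype b] (A : Matrix (a × b) (a × b) ℂ) :
    (pt A).trace = A.trace := rfl

lemma Matrix.IsHermitian.pt {A : Matrix (a × b) (a × b) ℂ} (hA : A.IsHermitian) :
    (pt A).IsHermitian := by
  ext p q
  exact congrFun (congrFun hA (p.1, q.2)) (q.1, p.2)

variable [Fintype a] [DecidableEq a] [Fintype b] [DecidableEq b]

lemma IsSep.pt {σ : Matrix (a × b) (a × b) ℂ} (hσ : IsSep σ) : IsSep (pt σ) := by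
  obtain ⟨m, p, A, B, hp, hp_sum, hA, hB, rfl⟩ := hσ
  refine ⟨m, p, A, fun i => (B i)ᵀ, hp, hp_sum, hA,
    fun i => ⟨(hB i).1.transpose, (Matrix.trace_transpose _).trans (hB i).2⟩, ?_⟩
  simp only [pt_sum, pt_smul, pt_kronecker]

end PartialTranspose

section SeparableCone

variable {a b : Type*} [Fintype a] [DecidableEq a] [Fintype b] [DecidableEq b]

lemma isState_maximallyMixed {n : Type*} [Fintype n] [DecidableEq n] [Nonempty n] :
    IsState ((Fintype.card n : ℂ)⁻¹ • (1 : Matrix n n ℂ)) := by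
  refine ⟨Matrix.PosSemidef.one.smul (by positivity), ?_⟩
  rw [Matrix.trace_smul, Matrix.trace_one, smul_eq_mul, inv_mul_cancel₀]
  exact Nat.cast_ne_zero.mpr Fintype.card_ne_zero

lemma isSep_kronecker {A : Matrix a a ℂ} {B : Matrix b b ℂ} (hA : IsState A) (hB : IsState B) :
    IsSep (A ⊗ₖ B) :=
  ⟨1, fun _ => 1, fun _ => A, fun _ => B, fun _ => zero_le_one, by simp, fun _ => hA,
    fun _ => hB, by simp⟩

lemma inSepCone_smul_one [Nonempty a] [Nonempty b] {c : ℝ} (hc : 0 ≤ c) :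
    InSepCone ((c : ℂ) • (1 : Matrix (a × b) (a × b) ℂ)) := by
  refine ⟨c * (Fintype.card a * Fintype.card b), _, by positivity,
    isSep_kronecker isState_maximallyMixed isState_maximallyMixed, ?_⟩
  rw [Matrix.smul_kronecker, Matrix.kronecker_smul, Matrix.one_kronecker_one, smul_smul,
    smul_smul]
  congr 1
  have ha : (Fintype.card a : ℂ) ≠ 0 := Nat.cast_ne_zero.mpr Fintype.card_ne_zero
  have hb : (Fintype.card b : ℂ) ≠ 0 := Nat.cast_ne_zero.mpr Fintype.card_ne_zero
  push_cast
  field_simp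

end SeparableCone

lemma Matrix.IsHermitian.exists_neg_smul_one_le_and_le_smul_one {n : Type*} [Fintype n]
    [DecidableEq n] {A : Matrix n n ℂ} (hA : A.IsHermitian) :
    ∃ r : ℝ, 0 ≤ r ∧ -((r : ℂ) • 1) ≤ A ∧ A ≤ (r : ℂ) • 1 := by
  obtain ⟨r, hr, hbound⟩ :=
    (ContinuousFunctionalCalculus.isCompact_spectrum (R := ℝ) A).isBounded.exists_pos_norm_le
  have hr_smul : (r : ℂ) • (1 : Matrix n n ℂ) = algebraMap ℝ _ r := by
    rw [Algebra.algebraMap_eq_smul_one, Complex.coe_smul]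
  refine ⟨r, hr.le, ?_, ?_⟩
  · rw [hr_smul, ← map_neg]
    exact algebraMap_le_of_le_spectrum (fun x hx => neg_le_of_abs_le (hbound x hx)) hA
  · rw [hr_smul]
    exact le_algebraMap_of_spectrum_le (fun x hx => le_of_abs_le (hbound x hx)) hA

namespace IsCPfun

variable {n m : Type*} [Fintype n] [Fintype m] {f : Matrix n n ℂ → Matrix m m ℂ}

lemma isLinearMap (hf : IsCPfun f) : IsLinearMap ℂ f := by
  obtain ⟨k, K, hK⟩ := hf
  refine ⟨fun X Y => ?_, fun c X => ?_⟩
  · simp only [hK, Matrix.mul_add, Matrix.add_mul, Finset.sum_add_distrib]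
  · simp only [hK, Matrix.mul_smul, Matrix.smul_mul, Finset.smul_sum]

lemma map_posSemidef (hf : IsCPfun f) {X : Matrix n n ℂ} (hX : X.PosSemidef) :
    (f X).PosSemidef := by
  obtain ⟨k, K, hK⟩ := hf
  rw [hK]
  exact Matrix.posSemidef_sum _ fun i _ => hX.mul_mul_conjTranspose_same (K i)

lemma monotone (hf : IsCPfun f) : Monotone f := fun X Y hXY => by
  rw [Matrix.le_iff, ← hf.isLinearMap.map_sub]
  exact hf.map_posSemidef hXY

end IsCPfun

lemma isLinearMap_of_isCPfun_pt_comp {a b a' b' : Type*} [Fintype a] [Fintype b] [Fintype a']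
    [Fintype b'] {N : Matrix (a × b) (a × b) ℂ → Matrix (a' × b') (a' × b') ℂ}
    (hPPT : IsCPfun (fun X => pt (N (pt X)))) : IsLinearMap ℂ N := by
  refine ⟨fun X Y => ?_, fun c X => ?_⟩
  · simpa using congrArg pt (hPPT.isLinearMap.map_add (pt X) (pt Y))
  · simpa using congrArg pt (hPPT.isLinearMap.map_smul c (pt X))

section KappaEntanglement

variable {a b a' b' : Type*} [Fintype a] [DecidableEq a] [Fintype b] [DecidableEq b]
  [Fintype a'] [DecidableEq a'] [Fintype b'] [DecidableEq b']

def kappaValues (ρ : Matrix (a × b) (a × b) ℂ) : Set ℝ :=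
  {t : ℝ | ∃ S, InSepCone S ∧ loe (-S) (pt ρ) ∧ loe (pt ρ) S ∧ t = S.trace.re}

lemma Ekappa_eq_logb_sInf_kappaValues (ρ : Matrix (a × b) (a × b) ℂ) :
    Ekappa ρ = Real.logb 2 (sInf (kappaValues ρ)) := rfl

lemma trace_re_le_of_mem_kappaValues {ρ : Matrix (a × b) (a × b) ℂ} {t : ℝ}
    (ht : t ∈ kappaValues ρ) : ρ.trace.re ≤ t := by
  obtain ⟨S, -, -, hρS, rfl⟩ := ht
  have h := (Complex.le_def.mp hρS.trace_nonneg).1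
  rw [Matrix.trace_sub, trace_pt, Complex.sub_re, Complex.zero_re] at h
  linarith

lemma kappaValues_nonempty [Nonempty a] [Nonempty b] {ρ : Matrix (a × b) (a × b) ℂ}
    (hρ : ρ.IsHermitian) : (kappaValues ρ).Nonempty := by
  obtain ⟨r, hr, hlow, hupp⟩ := hρ.pt.exists_neg_smul_one_le_and_le_smul_one
  exact ⟨_, _, inSepCone_smul_one hr, hlow, hupp, rfl⟩

lemma kappaValues_subset_kappaValues_map
    (N : Matrix (a × b) (a × b) ℂ → Matrix (a' × b') (a' × b') ℂ)
    (hTP : ∀ X, (N X).trace = X.trace) (hPPT : IsCPfun (fun X => pt (N (pt X))))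
    (hNE : ∀ σ, IsSep σ → IsSep (N σ)) (ρ : Matrix (a × b) (a × b) ℂ) :
    kappaValues ρ ⊆ kappaValues (N ρ) := by
  rintro t ⟨S, hS, hlow, hupp, rfl⟩
  refine ⟨pt (N (pt S)), ?_, ?_, ?_, by rw [trace_pt, hTP, trace_pt]⟩
  · obtain ⟨c, σ, hc, hσ, rfl⟩ := hS
    refine ⟨c, pt (N (pt σ)), hc, (hNE _ hσ.pt).pt, ?_⟩
    rw [pt_smul, (isLinearMap_of_isCPfun_pt_comp hPPT).map_smul, pt_smul]
  · rw [loe_iff_le, ← hPPT.isLinearMap.map_neg]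
    simpa only [pt_pt] using hPPT.monotone (loe_iff_le.mp hlow)
  · simpa only [loe_iff_le, pt_pt] using hPPT.monotone (loe_iff_le.mp hupp)

end KappaEntanglement

theorem stmt9_general {a b a' b' : Type*}
    [Fintype a] [DecidableEq a] [Fintype b] [DecidableEq b]
    [Fintype a'] [DecidableEq a'] [Fintype b'] [DecidableEq b']
    (N : Matrix (a × b) (a × b) ℂ → Matrix (a' × b') (a' × b') ℂ)
    (hTP : ∀ X, (N X).trace = X.trace)
    (hPPT : IsCPfun (fun X => pt (N (pt X))))
    (hNE : ∀ σ : Matrix (a × b) (a × b) ℂ, IsSep σ → IsSep (N σ))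
    (ρ : Matrix (a × b) (a × b) ℂ) (hρ : IsState ρ) :
    Ekappa (N ρ) ≤ Ekappa ρ := by
  have hab : Nonempty (a × b) := by
    by_contra h
    rw [not_nonempty_iff] at h
    simpa [Matrix.trace] using hρ.2
  obtain ⟨_, _⟩ := nonempty_prod.mp hab
  have hsub := kappaValues_subset_kappaValues_map N hTP hPPT hNE ρ
  have hne := kappaValues_nonempty hρ.1.1
  have hone : ∀ t ∈ kappaValues (N ρ), 1 ≤ t := fun t ht => by
    simpa [hTP, hρ.2] using trace_re_le_of_mem_kappaValues ht
  rw [Ekappa_eq_logb_sInf_kappaValues, Ekappa_eq_logb_sInf_kappaValues]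
  exact Real.logb_le_logb_of_le one_lt_two (one_pos.trans_le (le_csInf (hne.mono hsub) hone))
    (csInf_le_csInf ⟨1, hone⟩ hne hsub)

theorem stmt9 {a b a' b' : Type*}
    [Fintype a] [DecidableEq a] [Fintype b] [DecidableEq b]
    [Fintype a'] [DecidableEq a'] [Fintype b'] [DecidableEq b']
    (N : Matrix (a × b) (a × b) ℂ → Matrix (a' × b') (a' × b') ℂ)
    (hCP : IsCPfun N) (hTP : ∀ X, (N X).trace = X.trace)
    (hPPT : IsCPfun (fun X => pt (N (pt X))))
    (hNE : ∀ σ : Matrix (a × b) (a × b) ℂ, IsSep σ → IsSep (N σ))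
    (ρ : Matrix (a × b) (a × b) ℂ) (hρ : IsState ρ) :
    Ekappa (N ρ) ≤ Ekappa ρ :=
  stmt9_general N hTP hPPT hNE ρ hρ
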